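/- Let A be a Noetherian commutative ring, I an ideal of A such that A is I-adically complete (separated and complete in the I-adic topology), and let M and N be finitely generated A-modules. For each n ∈ ℕ let π_n : N → N/I^{n+1}N denote the quotient map. Then for every family of A-linear maps φ_n : M → N/I^{n+1}N (n ∈ ℕ) compatible with the transition maps N/I^{n+1}N → N/I^{m+1}N for m ≤ n, there exists a unique A-linear map φ : M → N such that π_n ∘ φ = φ_n for all n. Equivalently, the canonical map Hom_A(M,N) → lim_n Hom_A(M, N/I^{n+1}N) is bijective. -/

import Mathlib

open Submodule

private lemma aux_mem_smul_top_of_map {A : Type*} [CommRing A] (J : Ideal A)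
    {M N : Type*} [AddCommGroup M] [Module A M] [AddCommGroup N] [Module A N]
    (g : M →ₗ[A] N) {x : M} (hx : x ∈ (J • ⊤ : Submodule A M)) :
    g x ∈ (J • ⊤ : Submodule A N) := by
  have h : g x ∈ Submodule.map g (J • ⊤ : Submodule A M) := Submodule.mem_map_of_mem hx
  rw [Submodule.map_smul''] at h
  exact smul_mono_right J (le_top : Submodule.map g (⊤ : Submodule A M) ≤ ⊤) h

private lemma aux_pi_precomplete {A : Type*} [CommRing A] (I : Ideal A) [IsPrecomplete I A]
    (k : ℕ) : IsPrecomplete I (Fin k → A) := by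
  constructor
  intro f hf
  have hcomp : ∀ i : Fin k, ∃ L : A, ∀ n, f n i ≡ L [SMOD (I ^ n • ⊤ : Submodule A A)] := by
    intro i
    apply IsPrecomplete.prec ‹IsPrecomplete I A› (f := fun n => f n i)
    intro m n hmn
    rw [SModEq.sub_mem]
    have h := aux_mem_smul_top_of_map (I ^ m) (LinearMap.proj (R := A) (φ := fun _ : Fin k => A) i)
      (SModEq.sub_mem.mp (hf hmn))
    simpa using h
  choose L hL using hcomp
  refine ⟨L, fun n => ?_⟩
  rw [SModEq.sub_mem]
  have hsum : f n - L = ∑ i : Fin k, Pi.single i ((f n - L) i) := (Finset.univ_sum_single _).symm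
  rw [hsum]
  apply Submodule.sum_mem
  intro i _
  have hi : (f n - L) i ∈ I ^ n := by
    have h := SModEq.sub_mem.mp (hL i n)
    rw [smul_eq_mul, Ideal.mul_top] at h
    simpa using h
  have hsingle : (f n - L) i • (Pi.single i (1 : A) : Fin k → A)
      = (Pi.single i ((f n - L) i) : Fin k → A) := by
    ext j
    simp [Pi.single_apply, mul_ite]
  rw [← hsingle]
  exact Submodule.smul_mem_smul hi trivial

universe uA uN

private lemma aux_krull {A : Type uA} [CommRing A] [IsNoetherianRing A] (I : Ideal A)
    {N : Type uN} [AddCommGroup N] [Module A N] [Module.Finite A N] (x : N)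
    (hx : ∀ n : ℕ, x ∈ (I ^ n • ⊤ : Submodule A N)) : ∃ r ∈ I, r • x = x := by
  let e : A ≃+* ULift.{uN} A := ULift.ringEquiv.symm
  let I' : Ideal (ULift.{uN} A) := I.map (e : A →+* ULift.{uN} A)
  haveI : IsNoetherianRing (ULift.{uN} A) := isNoetherianRing_of_ringEquiv A e
  haveI : Module.Finite A (ULift.{uA} N) := Module.Finite.equiv ULift.moduleEquiv.symm
  haveI : Module.Finite (ULift.{uN} A) (ULift.{uA} N) := by
    obtain ⟨S, hS⟩ := Module.Finite.fg_top (R := A) (M := ULift.{uA} N)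
    have key : ∀ y ∈ Submodule.span A ((↑S : Set (ULift.{uA} N))),
        y ∈ Submodule.span (ULift.{uN} A) ((↑S : Set (ULift.{uA} N))) := by
      intro y hy
      induction hy using Submodule.span_induction with
      | mem z hz => exact Submodule.subset_span hz
      | zero => exact Submodule.zero_mem _
      | add a b _ _ ha hb => exact Submodule.add_mem _ ha hb
      | smul a z _ hz =>
        have h : a • z = (ULift.up a : ULift.{uN} A) • z := rfl
        rw [h]
        exact Submodule.smul_mem _ _ hz
    refine ⟨⟨S, eq_top_iff.mpr fun y _ => key y ?_⟩⟩
    rw [hS]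
    trivial
  have hmem : ∀ (n : ℕ) (y : N), y ∈ (I ^ n • ⊤ : Submodule A N) →
      (ULift.up y : ULift.{uA} N) ∈
        (I' ^ n • ⊤ : Submodule (ULift.{uN} A) (ULift.{uA} N)) := by
    intro n y hy
    have hpow : I' ^ n = Ideal.map (e : A →+* ULift.{uN} A) (I ^ n) :=
      (Ideal.map_pow _ _ _).symm
    rw [hpow]
    refine Submodule.smul_induction_on (p := fun y : N =>
        (ULift.up y : ULift.{uA} N) ∈
          (Ideal.map (e : A →+* ULift.{uN} A) (I ^ n) • ⊤ :
            Submodule (ULift.{uN} A) (ULift.{uA} N))) hy ?_ ?_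
    · intro a ha m _
      have h : (ULift.up (a • m) : ULift.{uA} N)
          = (ULift.up a : ULift.{uN} A) • (ULift.up m : ULift.{uA} N) := rfl
      rw [h]
      exact Submodule.smul_mem_smul (Ideal.mem_map_of_mem _ ha) trivial
    · intro y1 y2 h1 h2
      exact Submodule.add_mem _ h1 h2
  have hx' : (ULift.up x : ULift.{uA} N) ∈
      (⨅ n : ℕ, I' ^ n • ⊤ : Submodule (ULift.{uN} A) (ULift.{uA} N)) :=
    Submodule.mem_iInf _ |>.mpr fun n => hmem n x (hx n)
  obtain ⟨r', hr'⟩ := (Ideal.mem_iInf_smul_pow_eq_bot_iff I' (ULift.up x)).mp hx'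
  refine ⟨(r' : ULift.{uN} A).down, ?_, ?_⟩
  · have h : (r' : ULift.{uN} A) ∈ Ideal.map (e : A →+* ULift.{uN} A) I := r'.2
    rw [Ideal.map_comap_of_equiv e] at h
    exact Ideal.mem_comap.mp h
  · exact congrArg ULift.down hr'

private lemma aux_isAdicComplete {A : Type*} [CommRing A] [IsNoetherianRing A]
    (I : Ideal A) [IsAdicComplete I A]
    {N : Type*} [AddCommGroup N] [Module A N] [Module.Finite A N] :
    IsAdicComplete I N := by
  have haus : IsHausdorff I N := by
    constructor
    intro x hx
    obtain ⟨r, hrI, hr⟩ := aux_krull I x (fun n => by simpa [SModEq.sub_mem] using hx n)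
    have hj : r ∈ (⊥ : Ideal A).jacobson := IsAdicComplete.le_jacobson_bot I hrI
    have hu : IsUnit (1 - r) := by
      have h := Ideal.mem_jacobson_bot.mp hj (-1)
      simpa [mul_neg, mul_one, sub_eq_neg_add] using h
    obtain ⟨u, hu⟩ := hu
    have h0 : (1 - r) • x = 0 := by
      rw [sub_smul, one_smul, hr, sub_self]
    calc x = ((↑u⁻¹ * ↑u : A)) • x := by rw [u.inv_mul, one_smul]
      _ = (↑u⁻¹ : A) • ((↑u : A) • x) := by rw [mul_smul]
      _ = 0 := by rw [hu, h0, smul_zero]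
  have pre : IsPrecomplete I N := by
    obtain ⟨k, π, hπ⟩ := Module.Finite.exists_fin' A N
    have hmap : ∀ n : ℕ, Submodule.map π (I ^ n • ⊤ : Submodule A (Fin k → A))
        = (I ^ n • ⊤ : Submodule A N) := by
      intro n
      rw [Submodule.map_smul'', Submodule.map_top, LinearMap.range_eq_top.mpr hπ]
    have hpi : IsPrecomplete I (Fin k → A) := aux_pi_precomplete I k
    constructor
    intro f hf
    have hδ : ∀ n : ℕ, ∃ d : Fin k → A,
        d ∈ (I ^ n • ⊤ : Submodule A (Fin k → A)) ∧ π d = f (n + 1) - f n := by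
      intro n
      have hmem : f (n + 1) - f n ∈ (I ^ n • ⊤ : Submodule A N) := by
        have h := SModEq.sub_mem.mp (hf (Nat.le_succ n))
        simpa using Submodule.neg_mem _ h
      rw [← hmap n] at hmem
      obtain ⟨d, hd, hd'⟩ := hmem
      exact ⟨d, hd, hd'⟩
    choose δ hδ₁ hδ₂ using hδ
    -- recursively defined lifts
    set g : ℕ → (Fin k → A) := fun n =>
      Nat.rec (Classical.choose (hπ (f 0))) (fun n gn => gn + δ n) n with hg
    have hg0 : g 0 = Classical.choose (hπ (f 0)) := rfl
    have hgs : ∀ n, g (n + 1) = g n + δ n := fun n => rfl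
    have hπg : ∀ n, π (g n) = f n := by
      intro n
      induction n with
      | zero => rw [hg0]; exact Classical.choose_spec (hπ (f 0))
      | succ n ih =>
        rw [hgs, map_add, ih, hδ₂]
        abel
    have hcauchy : ∀ m n : ℕ, m ≤ n → g n - g m ∈ (I ^ m • ⊤ : Submodule A (Fin k → A)) := by
      intro m n hmn
      induction n, hmn using Nat.le_induction with
      | base => simpa using Submodule.zero_mem _
      | succ n hmn ih =>
        rw [hgs]
        have h : g n + δ n - g m = (g n - g m) + δ n := by abel
        rw [h]
        exact Submodule.add_mem _ ih
          (Submodule.smul_mono_left (Ideal.pow_le_pow_right hmn) (hδ₁ n))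
    obtain ⟨Lg, hLg⟩ := IsPrecomplete.prec hpi (f := g) (by
      intro m n hmn
      rw [SModEq.sub_mem]
      simpa using Submodule.neg_mem _ (hcauchy m n hmn))
    refine ⟨π Lg, fun n => ?_⟩
    rw [SModEq.sub_mem, ← hπg n, ← map_sub]
    exact aux_mem_smul_top_of_map _ π (SModEq.sub_mem.mp (hLg n))
  exact { toIsHausdorff := haus, toIsPrecomplete := pre }

/-- Let `A` be a Noetherian ring, `I` an ideal such that `A` is `I`-adically
complete, and let `M`, `N` be finitely generated `A`-modules.  Given any family of `A`-linear
maps `φ n : M → N / I^{n+1} N` compatible with the transition maps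
`N / I^{n+1} N → N / I^{m+1} N` (for `m ≤ n`), there exists a unique `A`-linear map
`φ : M → N` with `π n ∘ φ = φ n` for all `n`, where `π n : N → N / I^{n+1} N` is the quotient
map.  Equivalently, `Hom_A(M, N) → lim_n Hom_A(M, N / I^{n+1} N)` is bijective. -/
theorem hom_adicComplete_unique_lift {A : Type*} [CommRing A] [IsNoetherianRing A]
    (I : Ideal A) [IsAdicComplete I A]
    {M N : Type*} [AddCommGroup M] [Module A M] [AddCommGroup N] [Module A N]
    [Module.Finite A M] [Module.Finite A N]
    (φ : ∀ n : ℕ, M →ₗ[A] N ⧸ (I ^ (n + 1) • ⊤ : Submodule A N))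
    (hφ : ∀ m n : ℕ, (h : m ≤ n) →
      (Submodule.mapQ (I ^ (n + 1) • ⊤ : Submodule A N) (I ^ (m + 1) • ⊤ : Submodule A N)
          LinearMap.id
          (Submodule.smul_mono_left (Ideal.pow_le_pow_right (Nat.succ_le_succ h)))).comp (φ n)
        = φ m) :
    ∃! f : M →ₗ[A] N, ∀ n : ℕ,
      (Submodule.mkQ (I ^ (n + 1) • ⊤ : Submodule A N)).comp f = φ n := by
  have hN : IsAdicComplete I N := aux_isAdicComplete I
  -- the key: for each x, a unique limit
  have key : ∀ x : M, ∃ L : N, ∀ n : ℕ,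
      Submodule.mkQ (I ^ (n + 1) • ⊤ : Submodule A N) L = φ n x := by
    intro x
    -- choose lifts
    have hy : ∀ n : ℕ, ∃ y : N, Submodule.mkQ (I ^ (n + 1) • ⊤ : Submodule A N) y = φ n x :=
      fun n => Submodule.mkQ_surjective _ (φ n x)
    choose y hy using hy
    have hcau : ∀ {m n : ℕ}, m ≤ n → y m ≡ y n [SMOD (I ^ m • ⊤ : Submodule A N)] := by
      intro m n hmn
      rw [SModEq.sub_mem]
      have h1 : Submodule.mkQ (I ^ (m + 1) • ⊤ : Submodule A N) (y m)
          = Submodule.mkQ (I ^ (m + 1) • ⊤ : Submodule A N) (y n) := by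
        rw [hy m, ← hφ m n hmn]
        simp only [LinearMap.comp_apply, ← hy n]
        simp [Submodule.mkQ_apply, Submodule.mapQ_apply]
      have h2 := (Submodule.Quotient.eq _).mp h1
      exact Submodule.smul_mono_left (Ideal.pow_le_pow_right (Nat.le_succ m)) h2
    obtain ⟨L, hL⟩ := IsPrecomplete.prec hN.toIsPrecomplete hcau
    refine ⟨L, fun n => ?_⟩
    have h1 : y (n + 1) - L ∈ (I ^ (n + 1) • ⊤ : Submodule A N) := SModEq.sub_mem.mp (hL (n + 1))
    have h2 : Submodule.mkQ (I ^ (n + 1) • ⊤ : Submodule A N) L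
        = Submodule.mkQ (I ^ (n + 1) • ⊤ : Submodule A N) (y (n + 1)) := by
      exact ((Submodule.Quotient.eq _).mpr h1).symm
    rw [h2]
    have h3 := congrArg (fun ψ => ψ x) (hφ n (n + 1) (Nat.le_succ n))
    simp only [LinearMap.comp_apply] at h3
    rw [← h3, ← hy (n + 1)]
    simp [Submodule.mkQ_apply, Submodule.mapQ_apply]
  choose F hF using key
  -- elements in all I^(n+1) • ⊤ are zero
  have hzero : ∀ z : N, (∀ n : ℕ, z ∈ (I ^ (n + 1) • ⊤ : Submodule A N)) → z = 0 := by
    intro z hz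
    apply hN.toIsHausdorff.haus
    intro n
    rw [SModEq.sub_mem, sub_zero]
    exact Submodule.smul_mono_left (Ideal.pow_le_pow_right (Nat.le_succ n)) (hz n)
  have hmkzero : ∀ z : N, ∀ n : ℕ,
      Submodule.mkQ (I ^ (n + 1) • ⊤ : Submodule A N) z = 0 →
        z ∈ (I ^ (n + 1) • ⊤ : Submodule A N) := by
    intro z n h
    rwa [← Submodule.ker_mkQ (I ^ (n + 1) • ⊤ : Submodule A N), LinearMap.mem_ker]
  have hadd : ∀ x y : M, F (x + y) = F x + F y := by
    intro x y
    have h : F (x + y) - (F x + F y) = 0 := by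
      apply hzero
      intro n
      apply hmkzero
      rw [map_sub, map_add, hF (x + y) n, hF x n, hF y n, map_add, sub_self]
    exact sub_eq_zero.mp h
  have hsmul : ∀ (c : A) (x : M), F (c • x) = c • F x := by
    intro c x
    have h : F (c • x) - c • F x = 0 := by
      apply hzero
      intro n
      apply hmkzero
      rw [map_sub, map_smul, hF (c • x) n, hF x n, map_smul, sub_self]
    exact sub_eq_zero.mp h
  refine ⟨⟨⟨F, hadd⟩, hsmul⟩, fun n => ?_, fun g hg => ?_⟩
  · ext x
    exact hF x n
  · ext x
    have h : g x - F x = 0 := by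
      apply hzero
      intro n
      apply hmkzero
      have h1 : Submodule.mkQ (I ^ (n + 1) • ⊤ : Submodule A N) (g x) = φ n x :=
        congrArg (fun ψ => ψ x) (hg n)
      rw [map_sub, h1, hF x n, sub_self]
    exact sub_eq_zero.mp h
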